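/- Let S ⊆ 𝒟 be a nonempty finite set and F = F_S. Assume: (i) the second-moment bound (1/|S|) Σ_{x∈S} ‖∇ℓ(w,x)‖² ≤ M + M_G‖∇F(w)‖² for all w ∈ H; (ii) w̄ ∈ H is a global minimizer of F, i.e. F(w̄) ≤ F(w) for all w ∈ H; and (iii) F satisfies the Polyak–Łojasiewicz inequality 2c(F(w) − F(w̄)) ≤ ‖∇F(w)‖² for all w ∈ H. Then for every w ∈ H, (1/|S|) Σ_{x∈S} F(w − α∇ℓ(w,x)) − F(w̄) ≤ (1 − 2γc)(F(w) − F(w̄)) + α²LM/2. -/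

import Mathlib

/-!
Average the descent lemma `f y ≤ f x + ⟪∇f x, y - x⟫ + L/2 ‖y - x‖²` over the sampled steps
`y = w - α ∇ℓ(w, x)`: their mean direction is `∇F(w)`, so the mean loss after one step is at most
`F(w) - α‖∇F(w)‖² + α²L/2 · (1/|S|) ∑ ‖∇ℓ(w, x)‖²`. The second-moment bound turns this into
`F(w) - γ‖∇F(w)‖² + α²LM/2`, where `γ ≥ 0` by the stepsize condition, and the PL inequality bounds
`‖∇F(w)‖²` from below by `2c(F(w) - F(w̄))`.
-/

open Finset

/-- Empirical loss of `ℓ` over the finite set `S`: `F_S(w) = (1/|S|) ∑_{x ∈ S} ℓ(w, x)`. -/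
noncomputable def empLoss {H 𝒟 : Type*} (ℓ : H → 𝒟 → ℝ) (S : Finset 𝒟) (w : H) : ℝ :=
  (S.card : ℝ)⁻¹ * ∑ x ∈ S, ℓ w x

open scoped InnerProductSpace Gradient

section

variable {H : Type*} [NormedAddCommGroup H] [InnerProductSpace ℝ H] [CompleteSpace H]

theorem le_add_inner_gradient_add_sq_of_lipschitz {f : H → ℝ} {L : ℝ} (hf : Differentiable ℝ f)
    (hLip : ∀ u v : H, ‖∇ f u - ∇ f v‖ ≤ L * ‖u - v‖) (x y : H) :
    f y ≤ f x + ⟪∇ f x, y - x⟫_ℝ + L / 2 * ‖y - x‖ ^ 2 := by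
  set v := y - x
  -- `φ` is `f` minus its quadratic model along the ray from `x`; it is antitone for `t ≥ 0`.
  set φ : ℝ → ℝ := fun t => f (x + t • v) - t * ⟪∇ f x, v⟫_ℝ - L / 2 * t ^ 2 * ‖v‖ ^ 2
  have hφ' : ∀ t, HasDerivAt φ (⟪∇ f (x + t • v) - ∇ f x, v⟫_ℝ - L * t * ‖v‖ ^ 2) t := by
    intro t
    have hline : HasDerivAt (fun s : ℝ => x + s • v) v t := by
      simpa using ((hasDerivAt_id t).smul_const v).const_add x
    have hcomp := (hf (x + t • v)).hasFDerivAt.comp_hasDerivAt t hline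
    rw [← inner_gradient_left] at hcomp
    refine ((hcomp.sub ((hasDerivAt_id t).mul_const ⟪∇ f x, v⟫_ℝ)).sub
      (((hasDerivAt_pow 2 t).const_mul (L / 2)).mul_const (‖v‖ ^ 2))).congr_deriv ?_
    rw [inner_sub_left]
    push_cast
    ring
  have hslope : ∀ t ≥ 0, ⟪∇ f (x + t • v) - ∇ f x, v⟫_ℝ ≤ L * t * ‖v‖ ^ 2 := by
    intro t ht
    calc ⟪∇ f (x + t • v) - ∇ f x, v⟫_ℝ
        ≤ ‖∇ f (x + t • v) - ∇ f x‖ * ‖v‖ := real_inner_le_norm _ _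
      _ ≤ L * ‖(x + t • v) - x‖ * ‖v‖ := by gcongr; exact hLip _ _
      _ = L * t * ‖v‖ ^ 2 := by
          rw [add_sub_cancel_left, norm_smul, Real.norm_of_nonneg ht]; ring
  have hanti : AntitoneOn φ (Set.Ici 0) := by
    refine antitoneOn_of_hasDerivWithinAt_nonpos (convex_Ici 0)
      (fun t _ => (hφ' t).continuousAt.continuousWithinAt)
      (fun t _ => (hφ' t).hasDerivWithinAt) fun t ht => ?_
    rw [interior_Ici] at ht
    linarith [hslope t (le_of_lt ht)]
  have hφ01 := hanti (Set.mem_Ici.2 le_rfl) (Set.mem_Ici.2 zero_le_one) zero_le_one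
  simp only [φ, zero_smul, add_zero, one_smul, add_sub_cancel, v] at hφ01
  linarith

theorem average_image_sub_smul_le {f : H → ℝ} {L : ℝ} (hf : Differentiable ℝ f)
    (hLip : ∀ u v : H, ‖∇ f u - ∇ f v‖ ≤ L * ‖u - v‖) {ι : Type*} {S : Finset ι}
    (hS : S.Nonempty) (g : ι → H) (w : H) (hg : (S.card : ℝ)⁻¹ • ∑ i ∈ S, g i = ∇ f w) (α : ℝ) :
    (S.card : ℝ)⁻¹ * ∑ i ∈ S, f (w - α • g i)
      ≤ f w - α * ‖∇ f w‖ ^ 2 + α ^ 2 * L / 2 * ((S.card : ℝ)⁻¹ * ∑ i ∈ S, ‖g i‖ ^ 2) := by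
  have hcard : (S.card : ℝ)⁻¹ * S.card = 1 :=
    inv_mul_cancel₀ (Nat.cast_ne_zero.2 hS.card_pos.ne')
  have hstep : ∀ i ∈ S,
      f (w - α • g i) ≤ f w - α * ⟪∇ f w, g i⟫_ℝ + α ^ 2 * L / 2 * ‖g i‖ ^ 2 := by
    intro i _
    have h := le_add_inner_gradient_add_sq_of_lipschitz hf hLip w (w - α • g i)
    rw [sub_sub_cancel_left, inner_neg_right, real_inner_smul_right, norm_neg, norm_smul,
      Real.norm_eq_abs, mul_pow, sq_abs] at h
    linarith
  have hinner : (S.card : ℝ)⁻¹ * ∑ i ∈ S, ⟪∇ f w, g i⟫_ℝ = ‖∇ f w‖ ^ 2 := by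
    rw [← inner_sum, ← real_inner_smul_right, hg, real_inner_self_eq_norm_sq]
  calc (S.card : ℝ)⁻¹ * ∑ i ∈ S, f (w - α • g i)
      ≤ (S.card : ℝ)⁻¹ * ∑ i ∈ S, (f w - α * ⟪∇ f w, g i⟫_ℝ + α ^ 2 * L / 2 * ‖g i‖ ^ 2) := by
        gcongr with i hi
        exact hstep i hi
    _ = f w - α * ‖∇ f w‖ ^ 2 + α ^ 2 * L / 2 * ((S.card : ℝ)⁻¹ * ∑ i ∈ S, ‖g i‖ ^ 2) := by
        rw [sum_add_distrib, sum_sub_distrib, sum_const, nsmul_eq_mul, ← mul_sum, ← mul_sum,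
          ← hinner]
        linear_combination f w * hcard

variable {𝒟 : Type*} {ℓ : H → 𝒟 → ℝ}

theorem hasGradientAt_empLoss (hℓ : ∀ x : 𝒟, Differentiable ℝ (fun w => ℓ w x)) (S : Finset 𝒟)
    (w : H) :
    HasGradientAt (empLoss ℓ S) ((S.card : ℝ)⁻¹ • ∑ x ∈ S, ∇ (fun v => ℓ v x) w) w := by
  have h := (HasFDerivAt.fun_sum fun x (_ : x ∈ S) => (hℓ x w).hasFDerivAt).const_mul
    (S.card : ℝ)⁻¹
  rw [hasFDerivAt_iff_hasGradientAt, map_smul, map_sum] at h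
  exact h

theorem norm_gradient_empLoss_sub_le (hℓ : ∀ x : 𝒟, Differentiable ℝ (fun w => ℓ w x)) {L : ℝ}
    (hLip : ∀ (x : 𝒟) (u v : H), ‖∇ (fun w => ℓ w x) u - ∇ (fun w => ℓ w x) v‖ ≤ L * ‖u - v‖)
    {S : Finset 𝒟} (hS : S.Nonempty) (u v : H) :
    ‖∇ (empLoss ℓ S) u - ∇ (empLoss ℓ S) v‖ ≤ L * ‖u - v‖ := by
  rw [(hasGradientAt_empLoss hℓ S u).gradient, (hasGradientAt_empLoss hℓ S v).gradient,
    ← smul_sub, ← sum_sub_distrib]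
  calc ‖(S.card : ℝ)⁻¹ • ∑ x ∈ S, (∇ (fun w => ℓ w x) u - ∇ (fun w => ℓ w x) v)‖
      ≤ (S.card : ℝ)⁻¹ * ∑ x ∈ S, ‖∇ (fun w => ℓ w x) u - ∇ (fun w => ℓ w x) v‖ := by
        rw [norm_smul, norm_inv, Real.norm_natCast]
        gcongr
        exact norm_sum_le _ _
    _ ≤ (S.card : ℝ)⁻¹ * ∑ _x ∈ S, L * ‖u - v‖ := by
        gcongr with x
        exact hLip x u v
    _ = L * ‖u - v‖ := by
        rw [sum_const, nsmul_eq_mul, inv_mul_cancel_left₀ (Nat.cast_ne_zero.2 hS.card_pos.ne')]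

end

theorem sgd_one_step_contraction_general
    {H 𝒟 : Type*} [NormedAddCommGroup H] [InnerProductSpace ℝ H] [CompleteSpace H]
    (ℓ : H → 𝒟 → ℝ) (L M MG α γ c : ℝ)
    (hL : 0 < L)
    (hα : 0 < α) (hα2 : α ≤ 2 / (L * MG))
    (hγ : γ = α * (1 - α * L * MG / 2))
    (hdiff : ∀ x : 𝒟, Differentiable ℝ (fun w => ℓ w x))
    (hLip : ∀ (x : 𝒟) (w u : H),
      ‖gradient (fun v => ℓ v x) w - gradient (fun v => ℓ v x) u‖ ≤ L * ‖w - u‖)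
    (S : Finset 𝒟) (hS : S.Nonempty)
    (hsecond : ∀ w : H,
      (S.card : ℝ)⁻¹ * ∑ x ∈ S, ‖gradient (fun v => ℓ v x) w‖ ^ 2
        ≤ M + MG * ‖gradient (empLoss ℓ S) w‖ ^ 2)
    (wbar : H)
    (hPL : ∀ w : H,
      2 * c * (empLoss ℓ S w - empLoss ℓ S wbar) ≤ ‖gradient (empLoss ℓ S) w‖ ^ 2)
    (w : H) :
    (S.card : ℝ)⁻¹ * ∑ x ∈ S, empLoss ℓ S (w - α • gradient (fun v => ℓ v x) w)
        - empLoss ℓ S wbar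
      ≤ (1 - 2 * γ * c) * (empLoss ℓ S w - empLoss ℓ S wbar) + α ^ 2 * L * M / 2 := by
  have hstep := average_image_sub_smul_le
    (fun u => (hasGradientAt_empLoss hdiff S u).differentiableAt)
    (norm_gradient_empLoss_sub_le hdiff hLip hS) hS (fun x => ∇ (fun v => ℓ v x) w) w
    (hasGradientAt_empLoss hdiff S w).gradient.symm α
  have hLMG : 0 < L * MG := (div_pos_iff_of_pos_left two_pos).1 (hα.trans_le hα2)
  have hγ_nonneg : 0 ≤ γ := by
    have := (le_div_iff₀ hLMG).1 hα2
    rw [hγ]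
    nlinarith
  have hsecond_w := mul_le_mul_of_nonneg_left (hsecond w) (by positivity : 0 ≤ α ^ 2 * L / 2)
  have hPL_w := mul_le_mul_of_nonneg_left (hPL w) hγ_nonneg
  have hγ_eq : γ * ‖∇ (empLoss ℓ S) w‖ ^ 2
      = α * ‖∇ (empLoss ℓ S) w‖ ^ 2 - α ^ 2 * L / 2 * (MG * ‖∇ (empLoss ℓ S) w‖ ^ 2) := by
    rw [hγ]; ring
  linarith

/-- One-step expected contraction for SGD under the second-moment bound,
global minimality of `w̄` and the Polyak–Łojasiewicz inequality:
`E[F(w − α∇ℓ(w,ξ))] − F(w̄) ≤ (1 − 2γc)(F(w) − F(w̄)) + α²LM/2`. -/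
theorem sgd_one_step_contraction
    {H 𝒟 : Type*} [NormedAddCommGroup H] [InnerProductSpace ℝ H] [CompleteSpace H]
    (ℓ : H → 𝒟 → ℝ) (L M MG α γ c : ℝ)
    (hL : 0 < L) (hM : 0 ≤ M) (hMG : 1 ≤ MG)
    (hα : 0 < α) (hα2 : α ≤ 2 / (L * MG))
    (hγ : γ = α * (1 - α * L * MG / 2))
    (hc : 0 < c)
    (hdiff : ∀ x : 𝒟, Differentiable ℝ (fun w => ℓ w x))
    (hLip : ∀ (x : 𝒟) (w u : H),
      ‖gradient (fun v => ℓ v x) w - gradient (fun v => ℓ v x) u‖ ≤ L * ‖w - u‖)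
    (S : Finset 𝒟) (hS : S.Nonempty)
    (hsecond : ∀ w : H,
      (S.card : ℝ)⁻¹ * ∑ x ∈ S, ‖gradient (fun v => ℓ v x) w‖ ^ 2
        ≤ M + MG * ‖gradient (empLoss ℓ S) w‖ ^ 2)
    (wbar : H) (hmin : ∀ w : H, empLoss ℓ S wbar ≤ empLoss ℓ S w)
    (hPL : ∀ w : H,
      2 * c * (empLoss ℓ S w - empLoss ℓ S wbar) ≤ ‖gradient (empLoss ℓ S) w‖ ^ 2)
    (w : H) :
    (S.card : ℝ)⁻¹ * ∑ x ∈ S, empLoss ℓ S (w - α • gradient (fun v => ℓ v x) w)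
        - empLoss ℓ S wbar
      ≤ (1 - 2 * γ * c) * (empLoss ℓ S w - empLoss ℓ S wbar) + α ^ 2 * L * M / 2 :=
  sgd_one_step_contraction_general ℓ L M MG α γ c hL hα hα2 hγ hdiff hLip S hS hsecond wbar hPL w
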